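/- arXiv:1603.07046 — 2 statements merged into one kernel-verified Lean document; each statement's English description precedes it below -/
import Mathlib

section
/- Let f : {0,1}³ → ℂ, let m ≥ 3, and let u_j = [a_j, b_j] (1 ≤ j ≤ m) be pairwise linearly independent unary signatures such that ∂^{i}_{u_j}(f) is of product type for all i ∈ {1,2,3} and all 1 ≤ j ≤ m. Say a binary signature g satisfies condition D if g(0,0) = g(1,1) = 0, and condition E if g(0,1) = g(1,0) = 0. If for some i ∈ {1,2,3} there are two distinct indices j ≠ j' such that ∂^{i}_{u_j}(f) and ∂^{i}_{u_{j'}}(f) both satisfy condition D, or two distinct indices j ≠ j' such that both satisfy condition E, then f is of product type. -/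
/-- `h` is in `ℰ`: its support is contained in a pair of antipodal points
`{α, ᾱ}` (over `ℤ₂`, the complement `ᾱ` is `α + 1`). -/
def InE {ι : Type*} (h : (ι → ZMod 2) → ℂ) : Prop :=
  ∃ α : ι → ZMod 2, ∀ x, h x ≠ 0 → x = α ∨ x = α + 1

/-- `f` is of product type (`f ∈ 𝒫`): it factors over a partition of its
variables into signatures from `ℰ`. -/
def IsProductType {ι : Type*} [Fintype ι] [DecidableEq ι]
    (f : (ι → ZMod 2) → ℂ) : Prop :=
  ∃ (k : ℕ) (I : Fin k → Finset ι)
    (g : (j : Fin k) → ({i // i ∈ I j} → ZMod 2) → ℂ),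
    (∀ j, (I j).Nonempty) ∧
    (∀ j j', j ≠ j' → Disjoint (I j) (I j')) ∧
    (∀ i : ι, ∃ j, i ∈ I j) ∧
    (∀ j, InE (g j)) ∧
    ∀ x : ι → ZMod 2, f x = ∏ j, g j (fun i => x i.1)

/-- `∂^{i}_{[a,b]}(f)`: connect the unary signature `[a,b]` to the `i`-th
variable of the ternary signature `f`. -/
def del (f : (Fin 3 → ZMod 2) → ℂ) (i : Fin 3) (a b : ℂ) :
    (Fin 2 → ZMod 2) → ℂ :=
  fun y => a * f (i.insertNth 0 y) + b * f (i.insertNth 1 y)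

/-- Condition D for a binary signature. -/
def CondD (g : (Fin 2 → ZMod 2) → ℂ) : Prop := g ![0, 0] = 0 ∧ g ![1, 1] = 0

/-- Condition E for a binary signature. -/
def CondE (g : (Fin 2 → ZMod 2) → ℂ) : Prop := g ![0, 1] = 0 ∧ g ![1, 0] = 0


/-- Auxiliary: evaluation of `insertNth` at position 0 of `Fin 3`. -/
lemma ins0 (c : ZMod 2) (y : Fin 2 → ZMod 2) : (0 : Fin 3).insertNth c y = ![c, y 0, y 1] := by
  funext t; fin_cases t <;> rfl

/-- Auxiliary: evaluation of `insertNth` at position 1 of `Fin 3`. -/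
lemma ins1 (c : ZMod 2) (y : Fin 2 → ZMod 2) : (1 : Fin 3).insertNth c y = ![y 0, c, y 1] := by
  funext t; fin_cases t <;> rfl

/-- Auxiliary: evaluation of `insertNth` at position 2 of `Fin 3`. -/
lemma ins2 (c : ZMod 2) (y : Fin 2 → ZMod 2) : (2 : Fin 3).insertNth c y = ![y 0, y 1, c] := by
  funext t; fin_cases t <;> rfl

lemma eta3 (x : Fin 3 → ZMod 2) : x = ![x 0, x 1, x 2] := by
  funext t; fin_cases t <;> rfl

lemma vecadd (a0 a1 a2 : ZMod 2) : ![a0,a1,a2] + 1 = ![a0+1,a1+1,a2+1] := by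
  funext t; fin_cases t <;> rfl

lemma dl0 (f : (Fin 3 → ZMod 2) → ℂ) (A B : ℂ) (y : Fin 2 → ZMod 2) :
    del f 0 A B y = A * f ![0, y 0, y 1] + B * f ![1, y 0, y 1] := by
  show A * f ((0 : Fin 3).insertNth 0 y) + B * f ((0 : Fin 3).insertNth 1 y) = _
  rw [ins0, ins0]

lemma dl1 (f : (Fin 3 → ZMod 2) → ℂ) (A B : ℂ) (y : Fin 2 → ZMod 2) :
    del f 1 A B y = A * f ![y 0, 0, y 1] + B * f ![y 0, 1, y 1] := by
  show A * f ((1 : Fin 3).insertNth 0 y) + B * f ((1 : Fin 3).insertNth 1 y) = _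
  rw [ins1, ins1]

lemma dl2 (f : (Fin 3 → ZMod 2) → ℂ) (A B : ℂ) (y : Fin 2 → ZMod 2) :
    del f 2 A B y = A * f ![y 0, y 1, 0] + B * f ![y 0, y 1, 1] := by
  show A * f ((2 : Fin 3).insertNth 0 y) + B * f ((2 : Fin 3).insertNth 1 y) = _
  rw [ins2, ins2]

lemma solve2 {a b a' b' X Y : ℂ} (h : a * b' ≠ a' * b)
    (h1 : a * X + b * Y = 0) (h2 : a' * X + b' * Y = 0) : X = 0 ∧ Y = 0 := by
  have hd : a * b' - a' * b ≠ 0 := sub_ne_zero.mpr h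
  constructor
  · have : X * (a * b' - a' * b) = 0 := by linear_combination b' * h1 - b * h2
    exact (mul_eq_zero.mp this).resolve_right hd
  · have : Y * (a * b' - a' * b) = 0 := by linear_combination a * h2 - a' * h1
    exact (mul_eq_zero.mp this).resolve_right hd

lemma exists_ab {m : ℕ} (hm : 3 ≤ m) (a b : Fin m → ℂ)
    (hli : ∀ j j', j ≠ j' → a j * b j' ≠ a j' * b j) :
    ∃ j, a j ≠ 0 ∧ b j ≠ 0 := by
  by_contra hc
  push_neg at hc
  have h' : ∀ j, a j = 0 ∨ b j = 0 := by
    intro j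
    by_cases ha : a j = 0
    · exact Or.inl ha
    · exact Or.inr (hc j ha)
  set j0 : Fin m := ⟨0, by omega⟩
  set j1 : Fin m := ⟨1, by omega⟩
  set j2 : Fin m := ⟨2, by omega⟩
  have h01 : j0 ≠ j1 := by simp [j0, j1, Fin.ext_iff]
  have h02 : j0 ≠ j2 := by simp [j0, j2, Fin.ext_iff]
  have h12 : j1 ≠ j2 := by simp [j1, j2, Fin.ext_iff]
  rcases h' j0 with h0|h0 <;> rcases h' j1 with h1|h1 <;> rcases h' j2 with h2|h2 <;>
    first
      | exact hli j0 j1 h01 (by rw [h0, h1, zero_mul, zero_mul])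
      | exact hli j0 j1 h01 (by rw [h0, h1, mul_zero, mul_zero])
      | exact hli j0 j2 h02 (by rw [h0, h2, zero_mul, zero_mul])
      | exact hli j0 j2 h02 (by rw [h0, h2, mul_zero, mul_zero])
      | exact hli j1 j2 h12 (by rw [h1, h2, zero_mul, zero_mul])
      | exact hli j1 j2 h12 (by rw [h1, h2, mul_zero, mul_zero])

lemma binary_tri (h : (Fin 2 → ZMod 2) → ℂ) (hp : IsProductType h) :
    h ![0,0] * h ![1,1] = h ![0,1] * h ![1,0]
    ∨ (h ![0,0] = 0 ∧ h ![1,1] = 0)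
    ∨ (h ![0,1] = 0 ∧ h ![1,0] = 0) := by
  obtain ⟨k, I, g, hne, hdisj, hcov, hE, heq⟩ := hp
  obtain ⟨j0, hj0⟩ := hcov 0
  obtain ⟨j1, hj1⟩ := hcov 1
  by_cases hjj : j0 = j1
  · -- single block containing both variables
    subst hjj
    have hall : ∀ j, j = j0 := by
      intro j
      by_contra hne'
      obtain ⟨t, ht⟩ := hne j
      have : t = 0 ∨ t = 1 := by omega
      rcases this with rfl | rfl
      · exact (Finset.disjoint_left.mp (hdisj j j0 hne') ht) hj0
      · exact (Finset.disjoint_left.mp (hdisj j j0 hne') ht) hj1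
    have hprod : ∀ x, h x = g j0 (fun i => x i.1) := by
      intro x
      rw [heq x]
      exact Finset.prod_eq_single_of_mem j0 (Finset.mem_univ _)
        (fun j _ hne' => absurd (hall j) hne')
    obtain ⟨α, hα⟩ := hE j0
    have hmem : ∀ t : Fin 2, t ∈ I j0 := by
      intro t
      have : t = 0 ∨ t = 1 := by omega
      rcases this with rfl | rfl
      · exact hj0
      · exact hj1
    have two : ∀ s : ZMod 2, s + 1 + 1 = s := by decide
    have key : ∀ x y : Fin 2 → ZMod 2, h x ≠ 0 → h y ≠ 0 → x = y ∨ x = y + 1 := by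
      intro x y hx hy
      rw [hprod x] at hx
      rw [hprod y] at hy
      have hx' := hα _ hx
      have hy' := hα _ hy
      rcases hx' with hx' | hx' <;> rcases hy' with hy' | hy' <;>
          [left; right; right; left] <;> funext t <;>
        have e1 := congrFun hx' ⟨t, hmem t⟩ <;>
        have e2 := congrFun hy' ⟨t, hmem t⟩ <;>
        simp only [Pi.add_apply, Pi.one_apply] at e1 e2 ⊢ <;>
        rw [e1, e2] <;> try rw [two]
    by_cases h00 : h ![0,0] = 0
    · by_cases h11 : h ![1,1] = 0
      · exact Or.inr (Or.inl ⟨h00, h11⟩)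
      · refine Or.inr (Or.inr ⟨?_, ?_⟩)
        · by_contra h01
          exact absurd (key _ _ h01 h11) (by decide)
        · by_contra h10
          exact absurd (key _ _ h10 h11) (by decide)
    · refine Or.inr (Or.inr ⟨?_, ?_⟩)
      · by_contra h01
        exact absurd (key _ _ h01 h00) (by decide)
      · by_contra h10
        exact absurd (key _ _ h10 h00) (by decide)
  · -- two singleton blocks
    have hd := hdisj j0 j1 hjj
    have h1notin : (1 : Fin 2) ∉ I j0 := fun hmem => (Finset.disjoint_left.mp hd hmem) hj1
    have h0notin : (0 : Fin 2) ∉ I j1 := fun hmem => (Finset.disjoint_left.mp hd hj0) hmem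
    have hall : ∀ j, j = j0 ∨ j = j1 := by
      intro j
      by_contra hne'
      push_neg at hne'
      obtain ⟨t, ht⟩ := hne j
      have : t = 0 ∨ t = 1 := by omega
      rcases this with rfl | rfl
      · exact (Finset.disjoint_left.mp (hdisj j j0 hne'.1) ht) hj0
      · exact (Finset.disjoint_left.mp (hdisj j j1 hne'.2) ht) hj1
    have huniv : ({j0, j1} : Finset (Fin k)) = Finset.univ :=
      Finset.eq_univ_iff_forall.mpr fun j => by
        rcases hall j with rfl | rfl <;> simp
    have hr0 : ∀ x : Fin 2 → ZMod 2, (fun i : {i // i ∈ I j0} => x i.1) = (fun _ => x 0) := by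
      intro x
      funext i
      have : i.1 = 0 ∨ i.1 = 1 := by omega
      rcases this with e | e
      · rw [e]
      · exact absurd (e ▸ i.2) h1notin
    have hr1 : ∀ x : Fin 2 → ZMod 2, (fun i : {i // i ∈ I j1} => x i.1) = (fun _ => x 1) := by
      intro x
      funext i
      have : i.1 = 0 ∨ i.1 = 1 := by omega
      rcases this with e | e
      · exact absurd (e ▸ i.2) h0notin
      · rw [e]
    have hprod : ∀ x, h x = g j0 (fun _ => x 0) * g j1 (fun _ => x 1) := by
      intro x
      rw [heq x, ← huniv, Finset.prod_pair hjj, hr0 x, hr1 x]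
    left
    rw [hprod, hprod, hprod, hprod]
    show g j0 (fun _ => (0:ZMod 2)) * g j1 (fun _ => (0:ZMod 2)) *
        (g j0 (fun _ => (1:ZMod 2)) * g j1 (fun _ => (1:ZMod 2))) = _
    show _ = g j0 (fun _ => (0:ZMod 2)) * g j1 (fun _ => (1:ZMod 2)) *
        (g j0 (fun _ => (1:ZMod 2)) * g j1 (fun _ => (0:ZMod 2)))
    ring


lemma rank1 (A B C D : ℂ) (h : A * D = B * C) :
    ∃ u0 u1 v0 v1 : ℂ, A = u0*v0 ∧ B = u0*v1 ∧ C = u1*v0 ∧ D = u1*v1 := by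
  by_cases hA : A = 0
  · by_cases hB : B = 0
    · exact ⟨0, 1, C, D, by simp [hA], by simp [hB], by ring, by ring⟩
    · have hC : C = 0 := by
        have : B * C = 0 := by rw [← h, hA, zero_mul]
        exact (mul_eq_zero.mp this).resolve_left hB
      exact ⟨1, D/B, 0, B, by simp [hA], by ring, by simp [hC], by field_simp⟩
  · refine ⟨A, C, 1, B/A, by ring, by field_simp, by ring, ?_⟩
    field_simp
    linear_combination h

lemma core (F : ZMod 2 → ZMod 2 → ZMod 2 → ℂ) (t : ZMod 2) (A B : ℂ)
    (hA : A ≠ 0) (hB : B ≠ 0)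
    (hv : ∀ c d e, e ≠ d + t → F c d e = 0)
    (htri : (A * F 0 0 0 + B * F 0 1 0) * (A * F 1 0 1 + B * F 1 1 1)
          = (A * F 0 0 1 + B * F 0 1 1) * (A * F 1 0 0 + B * F 1 1 0)
        ∨ ((A * F 0 0 0 + B * F 0 1 0) = 0 ∧ (A * F 1 0 1 + B * F 1 1 1) = 0)
        ∨ ((A * F 0 0 1 + B * F 0 1 1) = 0 ∧ (A * F 1 0 0 + B * F 1 1 0) = 0)) :
    (∃ a0 a1 a2 : ZMod 2, ∀ c d e, F c d e ≠ 0 →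
        (c = a0 ∧ d = a1 ∧ e = a2) ∨ (c = a0+1 ∧ d = a1+1 ∧ e = a2+1))
    ∨ (∃ (g : ZMod 2 → ZMod 2 → ℂ) (h : ZMod 2 → ℂ) (b0 b1 : ZMod 2),
        (∀ d e, g d e ≠ 0 → (d = b0 ∧ e = b1) ∨ (d = b0+1 ∧ e = b1+1)) ∧
        ∀ c d e, F c d e = g d e * h c) := by
  have hz : ∀ s : ZMod 2, s = 0 ∨ s = 1 := by decide
  have hAB := mul_ne_zero hA hB
  rcases hz t with rfl | rfl
  · -- t = 0 : support on e = d
    have o0 : (0 : ZMod 2) + 0 = 0 := by decide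
    have o1 : (1 : ZMod 2) + 0 = 1 := by decide
    have z1 : F 0 0 1 = 0 := hv 0 0 1 (by decide)
    have z2 : F 0 1 0 = 0 := hv 0 1 0 (by decide)
    have z3 : F 1 0 1 = 0 := hv 1 0 1 (by decide)
    have z4 : F 1 1 0 = 0 := hv 1 1 0 (by decide)
    rw [z1, z2, z3, z4] at htri
    simp only [mul_zero, add_zero, zero_add] at htri
    rcases htri with hdet | ⟨hc1, hc2⟩ | ⟨hc1, hc2⟩

    · -- rank 1
      have hdet' : F 0 0 0 * F 1 1 1 = F 0 1 1 * F 1 0 0 :=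
        mul_left_cancel₀ hAB (by linear_combination hdet)
      obtain ⟨u0, u1, v0, v1, e1, e2, e3, e4⟩ :=
        rank1 (F 0 0 0) (F 0 1 1) (F 1 0 0) (F 1 1 1) (by linear_combination hdet')
      right
      refine ⟨fun d e => if e = d + 0 then (if d = 0 then v0 else v1) else 0,
        fun c => if c = 0 then u0 else u1, 0, 0, ?_, ?_⟩
      · intro d e hg
        dsimp only at hg
        by_cases hde : e = d + 0
        · rcases hz d with rfl | rfl
          · exact Or.inl ⟨rfl, hde.trans o0⟩
          · exact Or.inr ⟨by decide, hde.trans (by decide)⟩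
        · exact absurd (if_neg hde) hg
      · intro c d e
        dsimp only
        by_cases hde : e = d + 0
        · subst hde
          rcases hz c with rfl | rfl <;> rcases hz d with rfl | rfl
          · rw [if_pos rfl, if_pos rfl, if_pos rfl, o0]
            linear_combination e1
          · rw [if_pos rfl, if_neg (by decide : ¬(1:ZMod 2) = 0), if_pos rfl, o1]
            linear_combination e2
          · rw [if_pos rfl, if_pos rfl, if_neg (by decide : ¬(1:ZMod 2) = 0), o0]
            linear_combination e3
          · rw [if_pos rfl, if_neg (by decide : ¬(1:ZMod 2) = 0),
              if_neg (by decide : ¬(1:ZMod 2) = 0), o1]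
            linear_combination e4
        · rw [hv c d e hde, if_neg hde, zero_mul]

    · -- support contained in an antipodal pair
      have z5 : F 0 0 0 = 0 := (mul_eq_zero.mp hc1).resolve_left hA
      have z6 : F 1 1 1 = 0 := (mul_eq_zero.mp hc2).resolve_left hB
      left
      refine ⟨0, 1, 1, ?_⟩
      intro c d e hne
      rcases hz c with rfl | rfl <;> rcases hz d with rfl | rfl <;> rcases hz e with rfl | rfl <;>
        first
          | exact absurd (hv _ _ _ (by decide)) hne
          | exact absurd z5 hne
          | exact absurd z6 hne
          | decide

    · -- support contained in an antipodal pair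
      have z5 : F 0 1 1 = 0 := (mul_eq_zero.mp hc1).resolve_left hB
      have z6 : F 1 0 0 = 0 := (mul_eq_zero.mp hc2).resolve_left hA
      left
      refine ⟨0, 0, 0, ?_⟩
      intro c d e hne
      rcases hz c with rfl | rfl <;> rcases hz d with rfl | rfl <;> rcases hz e with rfl | rfl <;>
        first
          | exact absurd (hv _ _ _ (by decide)) hne
          | exact absurd z5 hne
          | exact absurd z6 hne
          | decide
  · -- t = 1 : support on e = d + 1
    have o0 : (0 : ZMod 2) + 1 = 1 := by decide
    have o1 : (1 : ZMod 2) + 1 = 0 := by decide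
    have z1 : F 0 0 0 = 0 := hv 0 0 0 (by decide)
    have z2 : F 0 1 1 = 0 := hv 0 1 1 (by decide)
    have z3 : F 1 0 0 = 0 := hv 1 0 0 (by decide)
    have z4 : F 1 1 1 = 0 := hv 1 1 1 (by decide)
    rw [z1, z2, z3, z4] at htri
    simp only [mul_zero, add_zero, zero_add] at htri
    rcases htri with hdet | ⟨hc1, hc2⟩ | ⟨hc1, hc2⟩

    · -- rank 1
      have hdet' : F 0 0 1 * F 1 1 0 = F 0 1 0 * F 1 0 1 :=
        mul_left_cancel₀ hAB (by linear_combination -hdet)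
      obtain ⟨u0, u1, v0, v1, e1, e2, e3, e4⟩ :=
        rank1 (F 0 0 1) (F 0 1 0) (F 1 0 1) (F 1 1 0) (by linear_combination hdet')
      right
      refine ⟨fun d e => if e = d + 1 then (if d = 0 then v0 else v1) else 0,
        fun c => if c = 0 then u0 else u1, 0, 1, ?_, ?_⟩
      · intro d e hg
        dsimp only at hg
        by_cases hde : e = d + 1
        · rcases hz d with rfl | rfl
          · exact Or.inl ⟨rfl, hde.trans o0⟩
          · exact Or.inr ⟨by decide, hde.trans (by decide)⟩
        · exact absurd (if_neg hde) hg
      · intro c d e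
        dsimp only
        by_cases hde : e = d + 1
        · subst hde
          rcases hz c with rfl | rfl <;> rcases hz d with rfl | rfl
          · rw [if_pos rfl, if_pos rfl, if_pos rfl, o0]
            linear_combination e1
          · rw [if_pos rfl, if_neg (by decide : ¬(1:ZMod 2) = 0), if_pos rfl, o1]
            linear_combination e2
          · rw [if_pos rfl, if_pos rfl, if_neg (by decide : ¬(1:ZMod 2) = 0), o0]
            linear_combination e3
          · rw [if_pos rfl, if_neg (by decide : ¬(1:ZMod 2) = 0),
              if_neg (by decide : ¬(1:ZMod 2) = 0), o1]
            linear_combination e4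
        · rw [hv c d e hde, if_neg hde, zero_mul]

    · -- support contained in an antipodal pair
      have z5 : F 0 1 0 = 0 := (mul_eq_zero.mp hc1).resolve_left hB
      have z6 : F 1 0 1 = 0 := (mul_eq_zero.mp hc2).resolve_left hA
      left
      refine ⟨0, 0, 1, ?_⟩
      intro c d e hne
      rcases hz c with rfl | rfl <;> rcases hz d with rfl | rfl <;> rcases hz e with rfl | rfl <;>
        first
          | exact absurd (hv _ _ _ (by decide)) hne
          | exact absurd z5 hne
          | exact absurd z6 hne
          | decide

    · -- support contained in an antipodal pair
      have z5 : F 0 0 1 = 0 := (mul_eq_zero.mp hc1).resolve_left hA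
      have z6 : F 1 1 0 = 0 := (mul_eq_zero.mp hc2).resolve_left hB
      left
      refine ⟨0, 1, 0, ?_⟩
      intro c d e hne
      rcases hz c with rfl | rfl <;> rcases hz d with rfl | rfl <;> rcases hz e with rfl | rfl <;>
        first
          | exact absurd (hv _ _ _ (by decide)) hne
          | exact absurd z5 hne
          | exact absurd z6 hne
          | decide

lemma prodtype_one (f : (Fin 3 → ZMod 2) → ℂ) (α : Fin 3 → ZMod 2)
    (hs : ∀ x, f x ≠ 0 → x = α ∨ x = α + 1) : IsProductType f := by
  refine ⟨1, fun _ => Finset.univ,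
    fun _ y => f (fun i => y ⟨i, Finset.mem_univ i⟩),
    fun _ => ⟨0, Finset.mem_univ 0⟩,
    fun j j' h => absurd (Subsingleton.elim j j') h,
    fun i => ⟨0, Finset.mem_univ i⟩, ?_, ?_⟩
  · intro j
    refine ⟨fun i => α i.1, ?_⟩
    intro y hy
    rcases hs _ hy with h | h
    · left
      funext i
      exact congrFun h i.1
    · right
      funext i
      exact congrFun h i.1
  · intro x
    rw [Fin.prod_univ_one]

lemma prodtype_two (f : (Fin 3 → ZMod 2) → ℂ) (p q r : Fin 3)
    (hpq : p ≠ q) (hpr : p ≠ r) (hqr : q ≠ r)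
    (hcov : ∀ i : Fin 3, i = p ∨ i = q ∨ i = r)
    (g : ZMod 2 → ZMod 2 → ℂ) (h : ZMod 2 → ℂ) (b0 b1 : ZMod 2)
    (hg : ∀ d e, g d e ≠ 0 → (d = b0 ∧ e = b1) ∨ (d = b0+1 ∧ e = b1+1))
    (heq : ∀ x, f x = g (x p) (x q) * h (x r)) : IsProductType f := by
  classical
  refine ⟨2, ![{p, q}, {r}], ?_⟩
  have hp0 : p ∈ ({p, q} : Finset (Fin 3)) := Finset.mem_insert_self _ _
  have hq0 : q ∈ ({p, q} : Finset (Fin 3)) := Finset.mem_insert_of_mem (Finset.mem_singleton_self _)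
  have hr1 : r ∈ ({r} : Finset (Fin 3)) := Finset.mem_singleton_self _
  refine ⟨Fin.cons (fun y => g (y ⟨p, hp0⟩) (y ⟨q, hq0⟩))
      (fun i0 => (fun y => h (y ⟨r, by rw [Subsingleton.elim i0 0]; exact hr1⟩))), ?_, ?_, ?_, ?_, ?_⟩
  · intro j
    fin_cases j
    · exact ⟨p, hp0⟩
    · exact ⟨r, hr1⟩
  · intro j j' hjj
    fin_cases j <;> fin_cases j'
    · exact absurd rfl hjj
    · show Disjoint {p, q} {r}
      simp only [Finset.disjoint_left, Finset.mem_insert, Finset.mem_singleton]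
      rintro i (rfl | rfl) rfl
      · exact hpr rfl
      · exact hqr rfl
    · show Disjoint {r} {p, q}
      simp only [Finset.disjoint_left, Finset.mem_insert, Finset.mem_singleton]
      rintro i rfl (h | h)
      · exact hpr h.symm
      · exact hqr h.symm
    · exact absurd rfl hjj
  · intro i
    rcases hcov i with rfl | rfl | rfl
    · exact ⟨0, hp0⟩
    · exact ⟨0, hq0⟩
    · exact ⟨1, hr1⟩
  · intro j
    fin_cases j
    · -- InE for the pair block
      refine ⟨fun i => if i.1 = p then b0 else b1, ?_⟩
      intro y hy
      rcases hg _ _ hy with ⟨h1, h2⟩ | ⟨h1, h2⟩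
      · left
        funext i
        rcases Finset.mem_insert.mp i.2 with e | e
        · have : i = ⟨p, hp0⟩ := Subtype.ext e
          rw [this]
          simp only [if_pos rfl]
          exact h1
        · have e' : i.1 = q := Finset.mem_singleton.mp e
          have : i = ⟨q, hq0⟩ := Subtype.ext e'
          rw [this]
          simp only [if_neg (show q ≠ p from fun hh => hpq hh.symm)]
          exact h2
      · right
        funext i
        simp only [Pi.add_apply, Pi.one_apply]
        rcases Finset.mem_insert.mp i.2 with e | e
        · have : i = ⟨p, hp0⟩ := Subtype.ext e
          rw [this]
          simp only [if_pos rfl]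
          exact h1
        · have e' : i.1 = q := Finset.mem_singleton.mp e
          have : i = ⟨q, hq0⟩ := Subtype.ext e'
          rw [this]
          simp only [if_neg (show q ≠ p from fun hh => hpq hh.symm)]
          exact h2
    · -- InE for the singleton block: any unary signature works
      refine ⟨fun _ => 0, ?_⟩
      intro y _
      have hz : ∀ s : ZMod 2, s = 0 ∨ s = 1 := by decide
      rcases hz (y ⟨r, hr1⟩) with e | e
      · left
        funext i
        have : i = ⟨r, hr1⟩ := Subtype.ext (Finset.mem_singleton.mp i.2)
        rw [this, e]
      · right
        funext i
        have : i = ⟨r, hr1⟩ := Subtype.ext (Finset.mem_singleton.mp i.2)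
        rw [this, e]
        rfl
  · intro x
    rw [Fin.prod_univ_two, heq x]
    rfl

theorem product_type_of_two_D_or_two_E (f : (Fin 3 → ZMod 2) → ℂ)
    (m : ℕ) (hm : 3 ≤ m) (a b : Fin m → ℂ)
    (hli : ∀ j j', j ≠ j' → a j * b j' ≠ a j' * b j)
    (hprod : ∀ (i : Fin 3) (j : Fin m), IsProductType (del f i (a j) (b j)))
    (hDE : ∃ i : Fin 3,
        (∃ j j', j ≠ j' ∧ CondD (del f i (a j) (b j)) ∧ CondD (del f i (a j') (b j')))
      ∨ (∃ j j', j ≠ j' ∧ CondE (del f i (a j) (b j)) ∧ CondE (del f i (a j') (b j')))) :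
    IsProductType f := by
  obtain ⟨i, hcase⟩ := hDE
  obtain ⟨j2, hA, hB⟩ := exists_ab hm a b hli
  have hz : ∀ s : ZMod 2, s = 0 ∨ s = 1 := by decide
  have hzt : ∀ d e : ZMod 2, e ≠ d + 1 → e = d := by decide
  have hzs : ∀ d e : ZMod 2, e ≠ d + 0 → e = d + 1 := by decide
  have mval : ∀ u v : ZMod 2, (![u, v] : Fin 2 → ZMod 2) 0 = u ∧ (![u, v] : Fin 2 → ZMod 2) 1 = v :=
    fun u v => ⟨rfl, rfl⟩
  have hi3 : i = 0 ∨ i = 1 ∨ i = 2 := by omega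
  rcases hi3 with rfl | rfl | rfl
  · -- pivot variable 0; F c d e = f ![c, d, e]
    obtain ⟨t, hv⟩ : ∃ t : ZMod 2, ∀ c d e : ZMod 2, e ≠ d + t → f ![c, d, e] = 0 := by
      rcases hcase with ⟨j, j', hjj, hD, hD'⟩ | ⟨j, j', hjj, hD, hD'⟩
      · refine ⟨1, ?_⟩
        have c1 : a j * f ![0,0,0] + b j * f ![1,0,0] = 0 := by
          have := hD.1; rwa [dl0] at this
        have c1' : a j' * f ![0,0,0] + b j' * f ![1,0,0] = 0 := by
          have := hD'.1; rwa [dl0] at this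
        have c2 : a j * f ![0,1,1] + b j * f ![1,1,1] = 0 := by
          have := hD.2; rwa [dl0] at this
        have c2' : a j' * f ![0,1,1] + b j' * f ![1,1,1] = 0 := by
          have := hD'.2; rwa [dl0] at this
        obtain ⟨z1, z2⟩ := solve2 (hli j j' hjj) c1 c1'
        obtain ⟨z3, z4⟩ := solve2 (hli j j' hjj) c2 c2'
        intro c d e hne
        rw [hzt d e hne]
        rcases hz c with rfl | rfl <;> rcases hz d with rfl | rfl <;>
          first | exact z1 | exact z2 | exact z3 | exact z4
      · refine ⟨0, ?_⟩
        have c1 : a j * f ![0,0,1] + b j * f ![1,0,1] = 0 := by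
          have := hD.1; rwa [dl0] at this
        have c1' : a j' * f ![0,0,1] + b j' * f ![1,0,1] = 0 := by
          have := hD'.1; rwa [dl0] at this
        have c2 : a j * f ![0,1,0] + b j * f ![1,1,0] = 0 := by
          have := hD.2; rwa [dl0] at this
        have c2' : a j' * f ![0,1,0] + b j' * f ![1,1,0] = 0 := by
          have := hD'.2; rwa [dl0] at this
        obtain ⟨z1, z2⟩ := solve2 (hli j j' hjj) c1 c1'
        obtain ⟨z3, z4⟩ := solve2 (hli j j' hjj) c2 c2'
        intro c d e hne
        rw [hzs d e hne]
        rcases hz c with rfl | rfl <;> rcases hz d with rfl | rfl <;>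
          first | exact z1 | exact z2 | exact z3 | exact z4
    have tri := binary_tri _ (hprod 1 j2)
    rw [dl1, dl1, dl1, dl1] at tri
    rcases core (fun c d e => f ![c, d, e]) t (a j2) (b j2) hA hB hv tri with
      ⟨a0, a1, a2, hsup⟩ | ⟨g, h, b0, b1, hg, heq⟩
    · apply prodtype_one f ![a0, a1, a2]
      intro x hx
      have hx' : f ![x 0, x 1, x 2] ≠ 0 := by rw [← eta3 x]; exact hx
      rcases hsup (x 0) (x 1) (x 2) hx' with ⟨e0, e1, e2⟩ | ⟨e0, e1, e2⟩
      · left; rw [eta3 x, e0, e1, e2]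
      · right; rw [eta3 x, vecadd, e0, e1, e2]
    · apply prodtype_two f 1 2 0 (by decide) (by decide) (by decide)
        (by decide) g h b0 b1 hg
      intro x
      have := heq (x 0) (x 1) (x 2)
      calc f x = f ![x 0, x 1, x 2] := by rw [← eta3 x]
        _ = g (x 1) (x 2) * h (x 0) := this
  · -- pivot variable 1; F c d e = f ![d, c, e]
    obtain ⟨t, hv⟩ : ∃ t : ZMod 2, ∀ c d e : ZMod 2, e ≠ d + t → f ![d, c, e] = 0 := by
      rcases hcase with ⟨j, j', hjj, hD, hD'⟩ | ⟨j, j', hjj, hD, hD'⟩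
      · refine ⟨1, ?_⟩
        have c1 : a j * f ![0,0,0] + b j * f ![0,1,0] = 0 := by
          have := hD.1; rwa [dl1] at this
        have c1' : a j' * f ![0,0,0] + b j' * f ![0,1,0] = 0 := by
          have := hD'.1; rwa [dl1] at this
        have c2 : a j * f ![1,0,1] + b j * f ![1,1,1] = 0 := by
          have := hD.2; rwa [dl1] at this
        have c2' : a j' * f ![1,0,1] + b j' * f ![1,1,1] = 0 := by
          have := hD'.2; rwa [dl1] at this
        obtain ⟨z1, z2⟩ := solve2 (hli j j' hjj) c1 c1'
        obtain ⟨z3, z4⟩ := solve2 (hli j j' hjj) c2 c2'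
        intro c d e hne
        rw [hzt d e hne]
        rcases hz c with rfl | rfl <;> rcases hz d with rfl | rfl <;>
          first | exact z1 | exact z2 | exact z3 | exact z4
      · refine ⟨0, ?_⟩
        have c1 : a j * f ![0,0,1] + b j * f ![0,1,1] = 0 := by
          have := hD.1; rwa [dl1] at this
        have c1' : a j' * f ![0,0,1] + b j' * f ![0,1,1] = 0 := by
          have := hD'.1; rwa [dl1] at this
        have c2 : a j * f ![1,0,0] + b j * f ![1,1,0] = 0 := by
          have := hD.2; rwa [dl1] at this
        have c2' : a j' * f ![1,0,0] + b j' * f ![1,1,0] = 0 := by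
          have := hD'.2; rwa [dl1] at this
        obtain ⟨z1, z2⟩ := solve2 (hli j j' hjj) c1 c1'
        obtain ⟨z3, z4⟩ := solve2 (hli j j' hjj) c2 c2'
        intro c d e hne
        rw [hzs d e hne]
        rcases hz c with rfl | rfl <;> rcases hz d with rfl | rfl <;>
          first | exact z1 | exact z2 | exact z3 | exact z4
    have tri := binary_tri _ (hprod 0 j2)
    rw [dl0, dl0, dl0, dl0] at tri
    rcases core (fun c d e => f ![d, c, e]) t (a j2) (b j2) hA hB hv tri with
      ⟨a0, a1, a2, hsup⟩ | ⟨g, h, b0, b1, hg, heq⟩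
    · apply prodtype_one f ![a1, a0, a2]
      intro x hx
      have hx' : f ![x 0, x 1, x 2] ≠ 0 := by rw [← eta3 x]; exact hx
      rcases hsup (x 1) (x 0) (x 2) hx' with ⟨e0, e1, e2⟩ | ⟨e0, e1, e2⟩
      · left; rw [eta3 x, e0, e1, e2]
      · right; rw [eta3 x, vecadd, e0, e1, e2]
    · apply prodtype_two f 0 2 1 (by decide) (by decide) (by decide)
        (by decide) g h b0 b1 hg
      intro x
      have := heq (x 1) (x 0) (x 2)
      calc f x = f ![x 0, x 1, x 2] := by rw [← eta3 x]
        _ = g (x 0) (x 2) * h (x 1) := this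
  · -- pivot variable 2; F c d e = f ![d, e, c]
    obtain ⟨t, hv⟩ : ∃ t : ZMod 2, ∀ c d e : ZMod 2, e ≠ d + t → f ![d, e, c] = 0 := by
      rcases hcase with ⟨j, j', hjj, hD, hD'⟩ | ⟨j, j', hjj, hD, hD'⟩
      · refine ⟨1, ?_⟩
        have c1 : a j * f ![0,0,0] + b j * f ![0,0,1] = 0 := by
          have := hD.1; rwa [dl2] at this
        have c1' : a j' * f ![0,0,0] + b j' * f ![0,0,1] = 0 := by
          have := hD'.1; rwa [dl2] at this
        have c2 : a j * f ![1,1,0] + b j * f ![1,1,1] = 0 := by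
          have := hD.2; rwa [dl2] at this
        have c2' : a j' * f ![1,1,0] + b j' * f ![1,1,1] = 0 := by
          have := hD'.2; rwa [dl2] at this
        obtain ⟨z1, z2⟩ := solve2 (hli j j' hjj) c1 c1'
        obtain ⟨z3, z4⟩ := solve2 (hli j j' hjj) c2 c2'
        intro c d e hne
        rw [hzt d e hne]
        rcases hz c with rfl | rfl <;> rcases hz d with rfl | rfl <;>
          first | exact z1 | exact z2 | exact z3 | exact z4
      · refine ⟨0, ?_⟩
        have c1 : a j * f ![0,1,0] + b j * f ![0,1,1] = 0 := by
          have := hD.1; rwa [dl2] at this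
        have c1' : a j' * f ![0,1,0] + b j' * f ![0,1,1] = 0 := by
          have := hD'.1; rwa [dl2] at this
        have c2 : a j * f ![1,0,0] + b j * f ![1,0,1] = 0 := by
          have := hD.2; rwa [dl2] at this
        have c2' : a j' * f ![1,0,0] + b j' * f ![1,0,1] = 0 := by
          have := hD'.2; rwa [dl2] at this
        obtain ⟨z1, z2⟩ := solve2 (hli j j' hjj) c1 c1'
        obtain ⟨z3, z4⟩ := solve2 (hli j j' hjj) c2 c2'
        intro c d e hne
        rw [hzs d e hne]
        rcases hz c with rfl | rfl <;> rcases hz d with rfl | rfl <;>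
          first | exact z1 | exact z2 | exact z3 | exact z4
    have tri := binary_tri _ (hprod 0 j2)
    rw [dl0, dl0, dl0, dl0] at tri
    have tri2 := Or.imp (fun h1 : _ = _ => h1.trans (mul_comm _ _))
      (Or.imp id (fun h1 : _ ∧ _ => And.intro h1.2 h1.1)) tri
    rcases core (fun c d e => f ![d, e, c]) t (a j2) (b j2) hA hB hv tri2 with
      ⟨a0, a1, a2, hsup⟩ | ⟨g, h, b0, b1, hg, heq⟩
    · apply prodtype_one f ![a1, a2, a0]
      intro x hx
      have hx' : f ![x 0, x 1, x 2] ≠ 0 := by rw [← eta3 x]; exact hx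
      rcases hsup (x 2) (x 0) (x 1) hx' with ⟨e0, e1, e2⟩ | ⟨e0, e1, e2⟩
      · left; rw [eta3 x, e0, e1, e2]
      · right; rw [eta3 x, vecadd, e0, e1, e2]
    · apply prodtype_two f 0 1 2 (by decide) (by decide) (by decide)
        (by decide) g h b0 b1 hg
      intro x
      have := heq (x 2) (x 0) (x 1)
      calc f x = f ![x 0, x 1, x 2] := by rw [← eta3 x]
        _ = g (x 0) (x 1) * h (x 2) := this
end

section
/- Let f : {0,1}³ → ℂ, let m ≥ 3, and let u_j = [a_j, b_j] (1 ≤ j ≤ m) be pairwise linearly independent unary signatures such that ∂^{i}_{u_j}(f) is of product type for all i ∈ {1,2,3} and all 1 ≤ j ≤ m. If for some i ∈ {1,2,3} there are three distinct indices j such that the 2×2 signature matrix of ∂^{i}_{u_j}(f) is singular, i.e., g(0,0)g(1,1) − g(0,1)g(1,0) = 0 for g = ∂^{i}_{u_j}(f), then f is of product type. -/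
set_option linter.unnecessarySeqFocus false

/-- The 2×2 signature matrix of the binary signature `g` is singular. -/
def SingularBinary (g : (Fin 2 → ZMod 2) → ℂ) : Prop :=
  g ![0, 0] * g ![1, 1] - g ![0, 1] * g ![1, 0] = 0

private lemma zmod2_cases (t : ZMod 2) : t = 0 ∨ t = 1 := by revert t; decide

private lemma resolve3 {d12 d13 d23 X : ℂ} (h : d12 * (d13 * (d23 * X)) = 0)
    (h12 : d12 ≠ 0) (h13 : d13 ≠ 0) (h23 : d23 ≠ 0) : X = 0 :=
  (mul_eq_zero.mp (((mul_eq_zero.mp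
    ((mul_eq_zero.mp h).resolve_left h12)).resolve_left h13))).resolve_left h23

/-- Vandermonde-type lemma: a quadratic form vanishing at three pairwise
independent points is identically zero. -/
private lemma quad_zero (a1 b1 a2 b2 a3 b3 A B C : ℂ)
    (h12 : a1 * b2 ≠ a2 * b1) (h13 : a1 * b3 ≠ a3 * b1) (h23 : a2 * b3 ≠ a3 * b2)
    (E1 : a1^2*A + a1*b1*B + b1^2*C = 0)
    (E2 : a2^2*A + a2*b2*B + b2^2*C = 0)
    (E3 : a3^2*A + a3*b3*B + b3^2*C = 0) :
    A = 0 ∧ B = 0 ∧ C = 0 := by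
  have d12 : a1*b2 - a2*b1 ≠ 0 := sub_ne_zero.mpr h12
  have d13 : a1*b3 - a3*b1 ≠ 0 := sub_ne_zero.mpr h13
  have d23 : a2*b3 - a3*b2 ≠ 0 := sub_ne_zero.mpr h23
  refine ⟨resolve3 ?_ d12 d13 d23, resolve3 ?_ d12 d13 d23, resolve3 ?_ d12 d13 d23⟩
  · linear_combination (b2*b3*(a2*b3-a3*b2)) * E1 - (b1*b3*(a1*b3-a3*b1)) * E2
      + (b1*b2*(a1*b2-a2*b1)) * E3
  · linear_combination (-(a2*b3-a3*b2)*(a2*b3+a3*b2)) * E1 + ((a1*b3-a3*b1)*(a1*b3+a3*b1)) * E2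
      - ((a1*b2-a2*b1)*(a1*b2+a2*b1)) * E3
  · linear_combination (a2*a3*(a2*b3-a3*b2)) * E1 - (a1*a3*(a1*b3-a3*b1)) * E2
      + (a1*a2*(a1*b2-a2*b1)) * E3

private lemma rank1_s16 (M : ZMod 2 → ZMod 2 → ℂ) (h : M 0 0 * M 1 1 = M 0 1 * M 1 0) :
    ∃ u v : ZMod 2 → ℂ, ∀ s t, M s t = u s * v t := by
  by_cases h00 : M 0 0 ≠ 0
  · refine ⟨fun s => M s 0, fun t => M 0 t / M 0 0, fun s t => ?_⟩
    rcases zmod2_cases s with hs | hs <;> rcases zmod2_cases t with ht | ht <;>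
      subst hs <;> subst ht <;> field_simp <;> linear_combination h
  · push_neg at h00
    by_cases h01 : M 0 1 ≠ 0
    · refine ⟨fun s => M s 1, fun t => M 0 t / M 0 1, fun s t => ?_⟩
      have h10 : M 1 0 = 0 := by
        have : M 0 1 * M 1 0 = 0 := by rw [← h, h00]; ring
        exact (mul_eq_zero.mp this).resolve_left h01
      rcases zmod2_cases s with hs | hs <;> rcases zmod2_cases t with ht | ht <;>
        subst hs <;> subst ht <;> field_simp <;> simp [h00, h10]
    · push_neg at h01
      refine ⟨fun s => if s = 0 then 0 else 1, fun t => M 1 t, fun s t => ?_⟩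
      rcases zmod2_cases s with hs | hs <;> subst hs
      · rcases zmod2_cases t with ht | ht <;> subst ht <;> simp [h00, h01]
      · norm_num [(by decide : (1 : ZMod 2) ≠ 0)]

private lemma prop2 (U S : ZMod 2 → ℂ) (h : U 0 * S 1 = U 1 * S 0) :
    (∃ t : ℂ, ∀ y, S y = t * U y) ∨ (U 0 = 0 ∧ U 1 = 0) := by
  by_cases hU0 : U 0 ≠ 0
  · refine Or.inl ⟨S 0 / U 0, fun y => ?_⟩
    rcases zmod2_cases y with hy | hy <;> subst hy <;> field_simp
    linear_combination h
  · push_neg at hU0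
    by_cases hU1 : U 1 ≠ 0
    · refine Or.inl ⟨S 1 / U 1, fun y => ?_⟩
      rcases zmod2_cases y with hy | hy <;> subst hy <;> field_simp
      linear_combination -h
    · push_neg at hU1
      exact Or.inr ⟨hU0, hU1⟩

/-- A singular 2×2 pencil has a common column factor or a common row factor. -/
private lemma pencil (p : ZMod 2 → ZMod 2 → ZMod 2 → ℂ)
    (hD0 : p 0 0 0 * p 1 1 0 = p 0 1 0 * p 1 0 0)
    (hD1 : p 0 0 1 * p 1 1 1 = p 0 1 1 * p 1 0 1)
    (hB : p 0 0 0 * p 1 1 1 + p 0 0 1 * p 1 1 0 = p 0 1 0 * p 1 0 1 + p 0 1 1 * p 1 0 0) :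
    (∃ (u : ZMod 2 → ℂ) (w : ZMod 2 → ZMod 2 → ℂ), ∀ s t c, p s t c = u s * w t c) ∨
    (∃ (w : ZMod 2 → ZMod 2 → ℂ) (v : ZMod 2 → ℂ), ∀ s t c, p s t c = w s c * v t) := by
  obtain ⟨u0, v0, h0⟩ := rank1_s16 (fun s t => p s t 0) hD0
  obtain ⟨u1, v1, h1⟩ := rank1_s16 (fun s t => p s t 1) hD1
  have key : (u0 0 * u1 1 - u0 1 * u1 0) * (v0 0 * v1 1 - v0 1 * v1 0) = 0 := by
    have e := hB
    rw [h0 0 0, h0 1 1, h0 0 1, h0 1 0, h1 0 0, h1 1 1, h1 0 1, h1 1 0] at e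
    linear_combination e
  rcases mul_eq_zero.mp key with hu | hv
  · left
    rcases prop2 u0 u1 (by linear_combination hu) with ⟨t, ht⟩ | ⟨hz0, hz1⟩
    · refine ⟨u0, fun y c => if c = 0 then v0 y else t * v1 y, fun s y c => ?_⟩
      rcases zmod2_cases c with hc | hc <;> subst hc
      · simp [h0 s y]
      · norm_num [(by decide : (1 : ZMod 2) ≠ 0), h1 s y, ht s]; ring
    · refine ⟨u1, fun y c => if c = 0 then 0 else v1 y, fun s y c => ?_⟩
      have hz : ∀ s, u0 s = 0 := by
        intro s; rcases zmod2_cases s with hs | hs <;> subst hs <;> assumption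
      rcases zmod2_cases c with hc | hc <;> subst hc
      · simp [h0 s y, hz s]
      · norm_num [(by decide : (1 : ZMod 2) ≠ 0), h1 s y]
  · right
    rcases prop2 v0 v1 (by linear_combination hv) with ⟨t, ht⟩ | ⟨hz0, hz1⟩
    · refine ⟨fun s c => if c = 0 then u0 s else t * u1 s, v0, fun s y c => ?_⟩
      rcases zmod2_cases c with hc | hc <;> subst hc
      · simp [h0 s y]
      · norm_num [(by decide : (1 : ZMod 2) ≠ 0), h1 s y, ht y]; ring
    · refine ⟨fun s c => if c = 0 then 0 else u1 s, v1, fun s y c => ?_⟩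
      have hz : ∀ y, v0 y = 0 := by
        intro y; rcases zmod2_cases y with hy | hy <;> subst hy <;> assumption
      rcases zmod2_cases c with hc | hc <;> subst hc
      · simp [h0 s y, hz y]
      · norm_num [(by decide : (1 : ZMod 2) ≠ 0), h1 s y]

private lemma inE_small {σ : Type*} (hsub : ∀ x y : σ, x = y) (h : (σ → ZMod 2) → ℂ) :
    InE h := by
  refine ⟨fun _ => 0, fun x _ => ?_⟩
  by_cases hσ : Nonempty σ
  · obtain ⟨i0⟩ := hσ
    rcases zmod2_cases (x i0) with h0 | h1
    · exact Or.inl (funext fun i => by rw [hsub i i0]; exact h0)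
    · refine Or.inr (funext fun i => ?_)
      rw [hsub i i0]
      simpa using h1
  · exact Or.inl (funext fun i => absurd ⟨i⟩ hσ)

/-- Characterization of binary product-type signatures. -/
private lemma binary_char (h : (Fin 2 → ZMod 2) → ℂ) (hP : IsProductType h) :
    InE h ∨ ∃ v w : ZMod 2 → ℂ, ∀ y, h y = v (y 0) * w (y 1) := by
  obtain ⟨k, I, G, hne, hdisj, hcov, hInE, hval⟩ := hP
  obtain ⟨j0, hj0⟩ := hcov 0
  obtain ⟨j1, hj1⟩ := hcov 1
  have hall : ∀ j, j = j0 ∨ j = j1 := by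
    intro j
    by_contra hne'
    push_neg at hne'
    obtain ⟨i, hi⟩ := hne j
    have : i = 0 ∨ i = 1 := by omega
    rcases this with hi0 | hi0 <;> subst hi0
    · exact Finset.disjoint_left.mp (hdisj j j0 hne'.1) hi hj0
    · exact Finset.disjoint_left.mp (hdisj j j1 hne'.2) hi hj1
  by_cases hj : j0 = j1
  · left
    subst hj
    have huniv : (Finset.univ : Finset (Fin k)) = {j0} := by
      ext j; simpa using (hall j).elim id id
    have hI0 : I j0 = Finset.univ := by
      apply Finset.eq_univ_iff_forall.mpr
      intro i
      have : i = 0 ∨ i = 1 := by omega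
      rcases this with hi | hi <;> subst hi <;> assumption
    have hmem : ∀ i : Fin 2, i ∈ I j0 := fun i => hI0 ▸ Finset.mem_univ i
    have hval' : ∀ y, h y = G j0 (fun i => y i.1) := by
      intro y
      rw [hval y, show (Finset.univ : Finset (Fin k)) = {j0} from huniv, Finset.prod_singleton]
    obtain ⟨α, hα⟩ := hInE j0
    refine ⟨fun i => α ⟨i, hmem i⟩, fun y hy => ?_⟩
    rw [hval'] at hy
    rcases hα _ hy with h1 | h1
    · refine Or.inl (funext fun i => ?_)
      have := congrFun h1 ⟨i, hmem i⟩
      simpa using this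
    · refine Or.inr (funext fun i => ?_)
      have := congrFun h1 ⟨i, hmem i⟩
      simpa using this
  · right
    have hI0 : I j0 = {0} := by
      ext i
      simp only [Finset.mem_singleton]
      constructor
      · intro hi
        have : i = 0 ∨ i = 1 := by omega
        rcases this with hi0 | hi0 <;> subst hi0
        · rfl
        · exact absurd hj1 (Finset.disjoint_left.mp (hdisj j0 j1 hj) hi)
      · rintro rfl; exact hj0
    have hI1 : I j1 = {1} := by
      ext i
      simp only [Finset.mem_singleton]
      constructor
      · intro hi
        have : i = 0 ∨ i = 1 := by omega
        rcases this with hi0 | hi0 <;> subst hi0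
        · exact absurd hj0 (Finset.disjoint_left.mp (hdisj j1 j0 (Ne.symm hj)) hi)
        · rfl
      · rintro rfl; exact hj1
    have huniv : (Finset.univ : Finset (Fin k)) = {j0, j1} := by
      ext j; simpa using hall j
    refine ⟨fun t => G j0 (fun _ => t), fun t => G j1 (fun _ => t), fun y => ?_⟩
    rw [hval y, show (Finset.univ : Finset (Fin k)) = {j0, j1} from huniv,
      Finset.prod_pair hj]
    congr 1
    · congr 1
      funext i
      have : i.1 = 0 := by
        have h2 : i.1 ∈ ({0} : Finset (Fin 2)) := by rw [← hI0]; exact i.2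
        simpa using h2
      rw [this]
    · congr 1
      funext i
      have : i.1 = 1 := by
        have h2 : i.1 ∈ ({1} : Finset (Fin 2)) := by rw [← hI1]; exact i.2
        simpa using h2
      rw [this]

private lemma isProductType_two (f : (Fin 3 → ZMod 2) → ℂ) (I0 I1 : Finset (Fin 3))
    (G0 : ({i // i ∈ I0} → ZMod 2) → ℂ) (G1 : ({i // i ∈ I1} → ZMod 2) → ℂ)
    (h0 : I0.Nonempty) (h1 : I1.Nonempty) (hd : Disjoint I0 I1)
    (hc : ∀ i, i ∈ I0 ∨ i ∈ I1) (hE0 : InE G0) (hE1 : InE G1)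
    (hv : ∀ x, f x = G0 (fun i => x i.1) * G1 (fun i => x i.1)) : IsProductType f := by
  refine ⟨2, ![I0, I1],
    Fin.cons G0 (Fin.cons G1 finZeroElim), ?_, ?_, ?_, ?_, ?_⟩
  · intro j; fin_cases j <;> simpa
  · intro j j' hne
    fin_cases j <;> fin_cases j' <;> simp_all <;>
      first | exact hd | exact hd.symm
  · intro i
    rcases hc i with h | h
    exacts [⟨0, by simpa using h⟩, ⟨1, by simpa using h⟩]
  · intro j; fin_cases j
    · exact hE0
    · exact hE1
  · intro x
    rw [Fin.prod_univ_two]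
    exact hv x

private lemma isProductType_three (f : (Fin 3 → ZMod 2) → ℂ) (I0 I1 I2 : Finset (Fin 3))
    (G0 : ({i // i ∈ I0} → ZMod 2) → ℂ) (G1 : ({i // i ∈ I1} → ZMod 2) → ℂ)
    (G2 : ({i // i ∈ I2} → ZMod 2) → ℂ)
    (h0 : I0.Nonempty) (h1 : I1.Nonempty) (h2 : I2.Nonempty)
    (hd01 : Disjoint I0 I1) (hd02 : Disjoint I0 I2) (hd12 : Disjoint I1 I2)
    (hc : ∀ i, i ∈ I0 ∨ i ∈ I1 ∨ i ∈ I2) (hE0 : InE G0) (hE1 : InE G1) (hE2 : InE G2)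
    (hv : ∀ x, f x = G0 (fun i => x i.1) * G1 (fun i => x i.1) * G2 (fun i => x i.1)) :
    IsProductType f := by
  refine ⟨3, ![I0, I1, I2],
    Fin.cons G0 (Fin.cons G1 (Fin.cons G2 finZeroElim)), ?_, ?_, ?_, ?_, ?_⟩
  · intro j; fin_cases j <;> simpa
  · intro j j' hne
    fin_cases j <;> fin_cases j' <;> simp_all <;> first | exact hd01 | exact hd01.symm | exact hd02 | exact hd02.symm | exact hd12 | exact hd12.symm
  · intro i
    rcases hc i with h | h | h
    exacts [⟨0, by simpa using h⟩, ⟨1, by simpa using h⟩, ⟨2, by simpa using h⟩]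
  · intro j; fin_cases j
    · exact hE0
    · exact hE1
    · exact hE2
  · intro x
    rw [Fin.prod_univ_three]
    exact hv x

/-- If one variable of `f` separates and all `∂` at that variable are of
product type, then `f` is of product type. -/
private lemma separated (f : (Fin 3 → ZMod 2) → ℂ)
    (m : ℕ) (hm : 3 ≤ m) (a b : Fin m → ℂ)
    (hli : ∀ j j', j ≠ j' → a j * b j' ≠ a j' * b j)
    (q r s : Fin 3) (hqr : q ≠ r) (hqs : q ≠ s) (hrs : r ≠ s)
    (u : ZMod 2 → ℂ) (g : ZMod 2 → ZMod 2 → ℂ)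
    (hprod : ∀ j : Fin m, IsProductType (del f q (a j) (b j)))
    (hf : ∀ x, f x = u (x q) * g (x r) (x s)) : IsProductType f := by
  obtain ⟨t1, ht1⟩ := Fin.exists_succAbove_eq hqr.symm
  obtain ⟨t2, ht2⟩ := Fin.exists_succAbove_eq hqs.symm
  obtain ⟨g', hg'⟩ : ∃ g' : (Fin 2 → ZMod 2) → ℂ, ∀ y, g' y = g (y t1) (y t2) :=
    ⟨_, fun _ => rfl⟩
  have hf' : ∀ x, f x = u (x q) * g' (fun t => x (q.succAbove t)) := by
    intro x
    rw [hf x, hg', ht1, ht2]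
  have hdel : ∀ (A B : ℂ) (y : Fin 2 → ZMod 2),
      del f q A B y = (A * u 0 + B * u 1) * g' y := by
    intro A B y
    have h0 : ∀ c : ZMod 2, f (q.insertNth c y) = u c * g' y := by
      intro c
      rw [hf' (q.insertNth c y), Fin.insertNth_apply_same]
      congr 1
      congr 1
      funext t
      exact Fin.insertNth_apply_succAbove (α := fun _ => ZMod 2) q c y t
    simp only [del, h0]
    ring
  by_cases hu : u 0 = 0 ∧ u 1 = 0
  · -- f is identically zero
    refine ⟨1, fun _ => Finset.univ, fun _ _ => 0, fun _ => Finset.univ_nonempty,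
      fun j j' hne => absurd (Subsingleton.elim j j') hne,
      fun i => ⟨0, Finset.mem_univ i⟩,
      fun _ => ⟨fun _ => 0, fun x hx => absurd rfl hx⟩, fun x => ?_⟩
    rw [hf x]
    rcases zmod2_cases (x q) with h | h <;> rw [h] <;> simp [hu.1, hu.2]
  · have hj : ∃ j : Fin m, a j * u 0 + b j * u 1 ≠ 0 := by
      by_contra hcon
      push_neg at hcon
      have hne01 : (⟨0, by omega⟩ : Fin m) ≠ ⟨1, by omega⟩ := by
        simp [Fin.ext_iff]
      have h0 := hcon ⟨0, by omega⟩
      have h1 := hcon ⟨1, by omega⟩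
      have hd := sub_ne_zero.mpr (hli _ _ hne01)
      refine hu ⟨?_, ?_⟩
      · have h2 : (a ⟨0, by omega⟩ * b ⟨1, by omega⟩ - a ⟨1, by omega⟩ * b ⟨0, by omega⟩)
            * u 0 = 0 := by linear_combination b ⟨1, by omega⟩ * h0 - b ⟨0, by omega⟩ * h1
        exact (mul_eq_zero.mp h2).resolve_left hd
      · have h2 : (a ⟨0, by omega⟩ * b ⟨1, by omega⟩ - a ⟨1, by omega⟩ * b ⟨0, by omega⟩)
            * u 1 = 0 := by linear_combination a ⟨0, by omega⟩ * h1 - a ⟨1, by omega⟩ * h0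
        exact (mul_eq_zero.mp h2).resolve_left hd
    obtain ⟨jx, hc⟩ := hj
    have hP := hprod jx
    have hform : del f q (a jx) (b jx) = fun y => (a jx * u 0 + b jx * u 1) * g' y :=
      funext fun y => hdel _ _ y
    rw [hform] at hP
    have hmem : ∀ t : Fin 2,
        q.succAbove t ∈ ({q.succAbove 0, q.succAbove 1} : Finset (Fin 3)) := by
      intro t; fin_cases t <;> simp
    have hne10 : q.succAbove 1 ≠ q.succAbove 0 := by
      intro hh
      exact absurd (Fin.succAbove_right_injective hh) (by decide)
    rcases binary_char _ hP with ⟨β, hβ⟩ | ⟨v, w, hvw⟩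
    · -- remaining pair of variables forms a single ℰ block
      have hg'E : InE g' := ⟨β, fun y hy => hβ y (mul_ne_zero hc hy)⟩
      obtain ⟨γ, hγ⟩ := hg'E
      apply isProductType_two f {q} {q.succAbove 0, q.succAbove 1}
        (fun z => u (z ⟨q, Finset.mem_singleton_self q⟩))
        (fun z => g' (fun t => z ⟨q.succAbove t, hmem t⟩))
      · exact Finset.singleton_nonempty q
      · exact Finset.insert_nonempty _ _
      · rw [Finset.disjoint_left]
        intro i hi hmem'
        rw [Finset.mem_singleton] at hi
        simp only [Finset.mem_insert, Finset.mem_singleton] at hmem'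
        rcases hmem' with h | h
        · exact Fin.succAbove_ne q 0 (h.symm.trans hi)
        · exact Fin.succAbove_ne q 1 (h.symm.trans hi)
      · intro i
        by_cases hiq : i = q
        · exact Or.inl (by simp [hiq])
        · obtain ⟨t, ht⟩ := Fin.exists_succAbove_eq hiq
          exact Or.inr (ht ▸ hmem t)
      · refine inE_small ?_ _
        intro x y
        apply Subtype.ext
        have hx := x.2
        have hy := y.2
        rw [Finset.mem_singleton] at hx hy
        rw [hx, hy]
      · -- InE of the pair block
        refine ⟨fun i => γ (if i.1 = q.succAbove 0 then 0 else 1), fun z hz => ?_⟩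
        have key : ∀ δ : Fin 2 → ZMod 2,
            (fun t => z ⟨q.succAbove t, hmem t⟩) = δ →
            z = fun i => δ (if i.1 = q.succAbove 0 then 0 else 1) := by
          intro δ hδ
          funext i
          have hi := i.2
          simp only [Finset.mem_insert, Finset.mem_singleton] at hi
          rcases hi with h | h
          · have hieq : i = ⟨q.succAbove 0, hmem 0⟩ := Subtype.ext h
            rw [hieq]
            simp only [if_pos rfl]
            exact congrFun hδ 0
          · have hieq : i = ⟨q.succAbove 1, hmem 1⟩ := Subtype.ext h
            rw [hieq]
            simp only [if_neg hne10]
            exact congrFun hδ 1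
        rcases hγ _ hz with h | h
        · exact Or.inl (key _ h)
        · exact Or.inr (by rw [key _ h]; rfl)
      · intro x
        exact hf' x
    · -- remaining pair of variables splits into two unary blocks
      have hc' : a jx * u 0 + b jx * u 1 ≠ 0 := hc
      apply isProductType_three f {q} {q.succAbove 0} {q.succAbove 1}
        (fun z => u (z ⟨q, Finset.mem_singleton_self q⟩) / (a jx * u 0 + b jx * u 1))
        (fun z => v (z ⟨q.succAbove 0, Finset.mem_singleton_self _⟩))
        (fun z => w (z ⟨q.succAbove 1, Finset.mem_singleton_self _⟩))
      · exact Finset.singleton_nonempty q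
      · exact Finset.singleton_nonempty _
      · exact Finset.singleton_nonempty _
      · rw [Finset.disjoint_singleton]
        exact (Fin.succAbove_ne q 0).symm
      · rw [Finset.disjoint_singleton]
        exact (Fin.succAbove_ne q 1).symm
      · rw [Finset.disjoint_singleton]
        exact hne10.symm
      · intro i
        by_cases hiq : i = q
        · exact Or.inl (by simp [hiq])
        · obtain ⟨t, ht⟩ := Fin.exists_succAbove_eq hiq
          fin_cases t
          · exact Or.inr (Or.inl (by rw [← ht]; simp))
          · exact Or.inr (Or.inr (by rw [← ht]; simp))
      · refine inE_small ?_ _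
        intro x y
        apply Subtype.ext
        have hx := x.2
        have hy := y.2
        rw [Finset.mem_singleton] at hx hy
        rw [hx, hy]
      · refine inE_small ?_ _
        intro x y
        apply Subtype.ext
        have hx := x.2
        have hy := y.2
        rw [Finset.mem_singleton] at hx hy
        rw [hx, hy]
      · refine inE_small ?_ _
        intro x y
        apply Subtype.ext
        have hx := x.2
        have hy := y.2
        rw [Finset.mem_singleton] at hx hy
        rw [hx, hy]
      · intro x
        have hw := hvw (fun t => x (q.succAbove t))
        rw [hf' x]
        field_simp
        linear_combination u (x q) * hw

theorem product_type_of_three_singular (f : (Fin 3 → ZMod 2) → ℂ)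
    (m : ℕ) (hm : 3 ≤ m) (a b : Fin m → ℂ)
    (hli : ∀ j j', j ≠ j' → a j * b j' ≠ a j' * b j)
    (hprod : ∀ (i : Fin 3) (j : Fin m), IsProductType (del f i (a j) (b j)))
    (hdet : ∃ (i : Fin 3) (j₁ j₂ j₃ : Fin m), j₁ ≠ j₂ ∧ j₁ ≠ j₃ ∧ j₂ ≠ j₃ ∧
      SingularBinary (del f i (a j₁) (b j₁)) ∧
      SingularBinary (del f i (a j₂) (b j₂)) ∧
      SingularBinary (del f i (a j₃) (b j₃))) :
    IsProductType f := by
  obtain ⟨i, j1, j2, j3, h12, h13, h23, S1, S2, S3⟩ := hdet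
  simp only [SingularBinary, del] at S1 S2 S3
  obtain ⟨hA, hB, hC⟩ := quad_zero (a j1) (b j1) (a j2) (b j2) (a j3) (b j3)
    (f (i.insertNth 0 ![0,0]) * f (i.insertNth 0 ![1,1])
      - f (i.insertNth 0 ![0,1]) * f (i.insertNth 0 ![1,0]))
    (f (i.insertNth 0 ![0,0]) * f (i.insertNth 1 ![1,1])
      + f (i.insertNth 1 ![0,0]) * f (i.insertNth 0 ![1,1])
      - f (i.insertNth 0 ![0,1]) * f (i.insertNth 1 ![1,0])
      - f (i.insertNth 1 ![0,1]) * f (i.insertNth 0 ![1,0]))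
    (f (i.insertNth 1 ![0,0]) * f (i.insertNth 1 ![1,1])
      - f (i.insertNth 1 ![0,1]) * f (i.insertNth 1 ![1,0]))
    (hli j1 j2 h12) (hli j1 j3 h13) (hli j2 j3 h23)
    (by linear_combination S1) (by linear_combination S2) (by linear_combination S3)
  have hp := pencil (fun s t c => f (i.insertNth c ![s, t])) ?_ ?_ ?_
  rotate_left
  · show f (i.insertNth 0 ![0,0]) * f (i.insertNth 0 ![1,1])
      = f (i.insertNth 0 ![0,1]) * f (i.insertNth 0 ![1,0])
    linear_combination hA
  · show f (i.insertNth 1 ![0,0]) * f (i.insertNth 1 ![1,1])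
      = f (i.insertNth 1 ![0,1]) * f (i.insertNth 1 ![1,0])
    linear_combination hC
  · show f (i.insertNth 0 ![0,0]) * f (i.insertNth 1 ![1,1])
      + f (i.insertNth 1 ![0,0]) * f (i.insertNth 0 ![1,1])
      = f (i.insertNth 0 ![0,1]) * f (i.insertNth 1 ![1,0])
      + f (i.insertNth 1 ![0,1]) * f (i.insertNth 0 ![1,0])
    linear_combination hB
  have hx : ∀ x : Fin 3 → ZMod 2,
      x = i.insertNth (x i) ![x (i.succAbove 0), x (i.succAbove 1)] := by
    intro x
    funext j
    by_cases hj : j = i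
    · subst hj
      rw [Fin.insertNth_apply_same]
    · obtain ⟨t, ht⟩ := Fin.exists_succAbove_eq hj
      rw [← ht, Fin.insertNth_apply_succAbove]
      fin_cases t <;> rfl
  have hd01 : i.succAbove 0 ≠ i.succAbove 1 := by
    intro hh
    exact absurd (Fin.succAbove_right_injective hh) (by decide)
  rcases hp with ⟨u, w, hval⟩ | ⟨w, v, hval⟩
  · refine separated f m hm a b hli (i.succAbove 0) (i.succAbove 1) i
      hd01 (Fin.succAbove_ne i 0) (Fin.succAbove_ne i 1) u w
      (fun j => hprod _ j) (fun x => ?_)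
    conv_lhs => rw [hx x]
    exact hval (x (i.succAbove 0)) (x (i.succAbove 1)) (x i)
  · refine separated f m hm a b hli (i.succAbove 1) (i.succAbove 0) i
      hd01.symm (Fin.succAbove_ne i 1) (Fin.succAbove_ne i 0) v w
      (fun j => hprod _ j) (fun x => ?_)
    conv_lhs => rw [hx x]
    rw [mul_comm]
    exact hval (x (i.succAbove 0)) (x (i.succAbove 1)) (x i)
end
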